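/- For every integer m ≥ 1 and every i ∈ {0, …, m−1}, the function I_i is continuous at every point of the domain D_m = {(t₀, …, t_m) : t_j > 0 for all j, Σ_{j=0}^{m−1} t_j < Δ, t_m < τ} at which Σ_{j=i+1}^{m} t_j ≠ Δ. -/

import Mathlib

open Real Set Filter MeasureTheory

/-- Conditional ISI density `F t s` given time-to-live `s` of the feedback impulse. -/
noncomputable def F (lam τ t s : ℝ) : ℝ :=
  if 0 < t ∧ t < s then lam ^ 2 * t * Real.exp (-lam * t)
  else if s ≤ t ∧ t ≤ s + τ then
    (1 + lam * s) * Real.exp (-lam * s) * (lam ^ 2 * (t - s) * Real.exp (-lam * (t - s)))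
  else 0

/-- Regular part of the stationary time-to-live density. -/
noncomputable def g (lam A B s : ℝ) : ℝ := A + B * Real.exp (2 * lam * s)

/-- Weight of the singular (Dirac) part of the stationary time-to-live distribution. -/
noncomputable def aC (lam Δ : ℝ) : ℝ :=
  4 * Real.exp (2 * lam * Δ) / ((3 + 2 * lam * Δ) * Real.exp (2 * lam * Δ) + 1)

/-- `T t p q = Σ_{j=p}^{q-1} t_j` (empty sums are `0`). -/
def T {n : ℕ} (t : Fin n → ℝ) (p q : ℕ) : ℝ :=
  ∑ j : Fin n, if p ≤ (j : ℕ) ∧ (j : ℕ) < q then t j else 0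

/-- `Ilow lam Δ τ A B i t` is the term `I_i`, `0 ≤ i ≤ m-1`, of the joint ISI density. -/
noncomputable def Ilow (lam Δ τ A B : ℝ) {m : ℕ} (i : ℕ) (t : Fin (m + 1) → ℝ) : ℝ :=
  (∏ k : Fin (m + 1), if i + 1 ≤ (k : ℕ) then F lam τ (t k) (Δ - T t (i + 1) (k : ℕ)) else 1) *
    ∫ s in T t 0 i..T t 0 (i + 1),
      g lam A B s *
        ∏ k : Fin (m + 1), if (k : ℕ) ≤ i then F lam τ (t k) (s - T t 0 (k : ℕ)) else 1

/-- `Itop lam Δ τ A B t` is the term `I_m` of the joint ISI density. -/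
noncomputable def Itop (lam Δ τ A B : ℝ) {m : ℕ} (t : Fin (m + 1) → ℝ) : ℝ :=
  (∫ s in T t 0 m..Δ, g lam A B s * ∏ k : Fin (m + 1), F lam τ (t k) (s - T t 0 (k : ℕ)))
    + aC lam Δ * ∏ k : Fin (m + 1), F lam τ (t k) (Δ - T t 0 (k : ℕ))

/-- `J lam Δ τ A B t = Σ_{i=0}^{m} I_i(t)`, the joint density of `m+1` consecutive ISIs. -/
noncomputable def J (lam Δ τ A B : ℝ) {m : ℕ} (t : Fin (m + 1) → ℝ) : ℝ :=
  (∑ i ∈ Finset.range m, Ilow lam Δ τ A B i t) + Itop lam Δ τ A B t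

/-!
`F` is smooth off the lines `t = 0`, `t = s` and `t = s + τ`, where it switches branches. On the
domain, the feedback factors `F(t_k, Δ - Σ_{j=i+1}^{k-1} t_j)`, `k > i`, stay off `t = s`: strictly
for `k < m` because `Σ_{j<m} t_j < Δ`, and for `k = m` because `Σ_{j=i+1}^m t_j ≠ Δ`. Inside the
integral, `s` runs over `(Σ_{j<i} t_j, Σ_{j≤i} t_j]`, where every factor has a fixed branch, so the
integrand may be replaced by a jointly continuous one and the integral moves continuously with its
limits.
-/

open Topology Interval

section PartialSums

variable {n : ℕ} (u : Fin n → ℝ) {p q : ℕ}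

lemma T_succ (hpq : p ≤ q) (hq : q < n) : T u p (q + 1) = T u p q + u ⟨q, hq⟩ := by
  unfold T
  rw [← Fintype.sum_ite_eq' (⟨q, hq⟩ : Fin n) u, ← Finset.sum_add_distrib]
  refine Finset.sum_congr rfl fun j _ => ?_
  split_ifs <;> simp_all [Fin.ext_iff] <;> omega

lemma T_self (p : ℕ) : T u p p = 0 :=
  Finset.sum_eq_zero fun j _ => if_neg (by omega)

variable {u}

lemma T_mono (hu : ∀ j, 0 ≤ u j) {p' q' : ℕ} (hp : p' ≤ p) (hq : q ≤ q') :
    T u p q ≤ T u p' q' :=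
  Finset.sum_le_sum fun j _ => by
    split_ifs <;> first | exact le_rfl | exact hu j | omega

lemma le_T (hu : ∀ j, 0 ≤ u j) {j : Fin n} (hp : p ≤ j) (hq : j < q) : u j ≤ T u p q := by
  have h := T_succ u le_rfl j.isLt
  rw [T_self, zero_add] at h
  exact h ▸ T_mono hu hp hq

@[fun_prop]
lemma continuous_T (p q : ℕ) : Continuous fun u : Fin n → ℝ => T u p q :=
  continuous_finsetSum _ fun j _ => by split_ifs <;> fun_prop

end PartialSums

noncomputable def F₁ (lam t : ℝ) : ℝ := lam ^ 2 * t * exp (-lam * t)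

noncomputable def F₂ (lam t s : ℝ) : ℝ := (1 + lam * s) * exp (-lam * s) * F₁ lam (t - s)

section Density

variable {lam τ t s : ℝ}

lemma F_of_lt (ht : 0 < t) (hts : t < s) : F lam τ t s = F₁ lam t := by
  simp [F, F₁, ht, hts]

lemma F_of_le (hst : s ≤ t) (htτ : t ≤ s + τ) : F lam τ t s = F₂ lam t s := by
  simp [F, F₂, F₁, hst, htτ, not_lt.mpr hst]

lemma continuousAt_F (ht : 0 < t) (hts : t ≠ s) (htτ : t < s + τ) :
    ContinuousAt (Function.uncurry (F lam τ)) (t, s) := by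
  rcases hts.lt_or_gt with hts | hst
  · have hU : ∀ᶠ p : ℝ × ℝ in 𝓝 (t, s), 0 < p.1 ∧ p.1 < p.2 :=
      ((isOpen_lt continuous_const continuous_fst).inter
        (isOpen_lt continuous_fst continuous_snd)).mem_nhds ⟨ht, hts⟩
    refine ContinuousAt.congr (f := fun p => F₁ lam p.1) (by unfold F₁; fun_prop) ?_
    filter_upwards [hU] with p hp using (F_of_lt hp.1 hp.2).symm
  · have hU : ∀ᶠ p : ℝ × ℝ in 𝓝 (t, s), p.2 < p.1 ∧ p.1 < p.2 + τ :=
      ((isOpen_lt continuous_snd continuous_fst).inter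
        (isOpen_lt continuous_fst (by fun_prop))).mem_nhds ⟨hst, htτ⟩
    refine ContinuousAt.congr (f := fun p => F₂ lam p.1 p.2) (by unfold F₂ F₁; fun_prop) ?_
    filter_upwards [hU] with p hp using (F_of_le hp.1.le hp.2.le).symm

end Density

lemma continuousAt_intervalIntegral_of_eventually_eqOn {X E : Type*} [TopologicalSpace X]
    [NormedAddCommGroup E] [NormedSpace ℝ E] {f φ : X → ℝ → E} (hφ : Continuous φ.uncurry)
    {a b : X → ℝ} (ha : Continuous a) (hb : Continuous b) {x₀ : X}
    (hf : ∀ᶠ x in 𝓝 x₀, EqOn (f x) (φ x) (Ι (a x) (b x))) :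
    ContinuousAt (fun x => ∫ s in a x..b x, f x s) x₀ := by
  have hφint : Continuous fun x => ∫ s in a x..b x, φ x s := by
    have hsplit : ∀ x, ∫ s in a x..b x, φ x s = (∫ s in 0..b x, φ x s) - ∫ s in 0..a x, φ x s :=
      fun x => (intervalIntegral.integral_interval_sub_left
        ((hφ.uncurry_left x).intervalIntegrable _ _)
        ((hφ.uncurry_left x).intervalIntegrable _ _)).symm
    simp_rw [hsplit]
    fun_prop
  refine hφint.continuousAt.congr ?_
  filter_upwards [hf] with x hx
  exact intervalIntegral.integral_congr_ae (ae_of_all _ hx) |>.symm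

/-- On the integration range of `I_i`, when every `u j` lies in `(0, τ)`, the factors `k < i` of
the integrand are in the first branch of `F` and the factor `k = i` is in the second. -/
noncomputable def smoothIntegrand (lam A B : ℝ) (i : ℕ) {n : ℕ} (u : Fin n → ℝ) (s : ℝ) : ℝ :=
  g lam A B s * ∏ k : Fin n,
    if (k : ℕ) < i then F₁ lam (u k) else if (k : ℕ) = i then F₂ lam (u k) (s - T u 0 i) else 1

lemma continuous_smoothIntegrand (lam A B : ℝ) (i n : ℕ) :
    Continuous (smoothIntegrand lam A B i (n := n)).uncurry := by
  unfold Function.uncurry smoothIntegrand g F₂ F₁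
  refine Continuous.mul (by fun_prop) (continuous_finsetProd _ fun k _ => ?_)
  split_ifs <;> fun_prop

lemma integrand_eq_smoothIntegrand {lam τ A B : ℝ} {i n : ℕ} (hi : i < n) {u : Fin n → ℝ}
    (hu : ∀ j, u j ∈ Ioo 0 τ) {s : ℝ} (hs : s ∈ Ioc (T u 0 i) (T u 0 (i + 1))) :
    g lam A B s * ∏ k : Fin n, (if (k : ℕ) ≤ i then F lam τ (u k) (s - T u 0 k) else 1) =
      smoothIntegrand lam A B i u s := by
  have hu₀ : ∀ j, 0 ≤ u j := fun j => (hu j).1.le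
  unfold smoothIntegrand
  congr 1
  refine Finset.prod_congr rfl fun k _ => ?_
  rcases lt_trichotomy (k : ℕ) i with hki | rfl | hik
  · have hk : T u 0 k + u k ≤ T u 0 i := by
      rw [← T_succ u (Nat.zero_le _) k.isLt]
      exact T_mono hu₀ le_rfl hki
    rw [if_pos hki.le, if_pos hki, F_of_lt (hu k).1 (by linarith [hs.1])]
  · rw [T_succ u (Nat.zero_le _) hi] at hs
    rw [if_pos le_rfl, if_neg (lt_irrefl _), if_pos rfl,
      F_of_le (by linarith [hs.2]) (by linarith [hs.1, (hu k).2])]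
  · rw [if_neg hik.not_ge, if_neg hik.not_gt, if_neg hik.ne']

section Domain

variable {Δ τ : ℝ} {m : ℕ} {t : Fin (m + 1) → ℝ}

lemma apply_lt_of_T_lt (hpos : ∀ j, 0 < t j) (hsum : T t 0 m < Δ) (hlast : t (Fin.last m) < τ)
    (hΔτ : Δ < τ) (j : Fin (m + 1)) : t j < τ := by
  rcases (Nat.lt_succ_iff.mp j.isLt).lt_or_eq with hj | hj
  · linarith [le_T (fun j => (hpos j).le) (Nat.zero_le j) hj]
  · rwa [show j = Fin.last m from Fin.ext hj]

lemma continuousAt_prod_F_feedback (lam : ℝ) {i : ℕ} (hpos : ∀ j, 0 < t j)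
    (hτ : ∀ j, t j < τ) (hsum : T t 0 m < Δ) (hne : T t (i + 1) (m + 1) ≠ Δ) :
    ContinuousAt (fun u : Fin (m + 1) → ℝ =>
      ∏ k : Fin (m + 1), if i + 1 ≤ (k : ℕ) then F lam τ (u k) (Δ - T u (i + 1) k) else 1) t := by
  have ht₀ : ∀ j, 0 ≤ t j := fun j => (hpos j).le
  refine tendsto_finsetProd _ fun k _ => ?_
  split_ifs with hk
  · have hsucc := T_succ t hk k.isLt
    have hk_le : T t (i + 1) k ≤ T t 0 m := T_mono ht₀ (Nat.zero_le _) (Nat.lt_succ_iff.mp k.isLt)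
    refine (continuousAt_F (hpos k) ?_ (by linarith [hτ k])).comp
      (f := fun u : Fin (m + 1) → ℝ => (u k, Δ - T u (i + 1) k)) (by fun_prop)
    rcases (Nat.lt_succ_iff.mp k.isLt).lt_or_eq with hkm | hkm
    · have : T t (i + 1) (k + 1) ≤ T t 0 m := T_mono ht₀ (Nat.zero_le _) hkm
      exact ne_of_lt (by linarith)
    · have : T t (i + 1) (k + 1) = T t (i + 1) (m + 1) := by rw [hkm]
      intro h
      exact hne (by linarith)
  · exact continuousAt_const

end Domain

theorem stmt8_general (lam Δ τ A B : ℝ) (hΔτ : Δ < τ)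
    (m : ℕ) (i : ℕ) (hi : i < m) (t : Fin (m + 1) → ℝ)
    (ht : (∀ j, 0 < t j) ∧ T t 0 m < Δ ∧ t (Fin.last m) < τ)
    (hne : T t (i + 1) (m + 1) ≠ Δ) :
    ContinuousWithinAt (Ilow lam Δ τ A B i)
      {u : Fin (m + 1) → ℝ | (∀ j, 0 < u j) ∧ T u 0 m < Δ ∧ u (Fin.last m) < τ} t := by
  obtain ⟨hpos, hsum, hlast⟩ := ht
  have hτ := apply_lt_of_T_lt hpos hsum hlast hΔτ
  have hbox : Set.pi univ (fun _ => Ioo 0 τ) ∈ 𝓝 t :=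
    set_pi_mem_nhds finite_univ fun j _ => Ioo_mem_nhds (hpos j) (hτ j)
  unfold Ilow
  refine ((continuousAt_prod_F_feedback lam hpos hτ hsum hne).mul
    (continuousAt_intervalIntegral_of_eventually_eqOn (continuous_smoothIntegrand lam A B i (m + 1))
      (continuous_T 0 i) (continuous_T 0 (i + 1)) ?_)).continuousWithinAt
  filter_upwards [hbox] with u hu s hs
  have hu' : ∀ j, u j ∈ Ioo 0 τ := mem_univ_pi.mp hu
  rw [uIoc_of_le (T_mono (fun j => (hu' j).1.le) le_rfl (Nat.le_succ i))] at hs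
  exact integrand_eq_smoothIntegrand (hi.trans (lt_add_one m)) hu' hs

/-- for `m ≥ 1` and `0 ≤ i ≤ m−1`, the term `I_i` is continuous at every
point of `D_m = {t_j > 0 ∀ j, Σ_{j=0}^{m−1} t_j < Δ, t_m < τ}` at which
`Σ_{j=i+1}^{m} t_j ≠ Δ`. -/
theorem stmt8 (lam Δ τ A B : ℝ) (hlam : 0 < lam) (hΔ : 0 < Δ) (hΔτ : Δ < τ)
    (m : ℕ) (hm : 1 ≤ m) (i : ℕ) (hi : i < m) (t : Fin (m + 1) → ℝ)
    (ht : (∀ j, 0 < t j) ∧ T t 0 m < Δ ∧ t (Fin.last m) < τ)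
    (hne : T t (i + 1) (m + 1) ≠ Δ) :
    ContinuousWithinAt (Ilow lam Δ τ A B i)
      {u : Fin (m + 1) → ℝ | (∀ j, 0 < u j) ∧ T u 0 m < Δ ∧ u (Fin.last m) < τ} t :=
  stmt8_general lam Δ τ A B hΔτ m i hi t ht hne
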